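/- arXiv:1812.01453 — 2 statements merged into one kernel-verified Lean document; each statement's English description precedes it below -/
import Mathlib

section
/- Let x and y be real numbers with |x| < π/(2√2) and |y| < √(π/2). Then log(cos(y)/cos(x)) = ∑_{k=1}^∞ [ L_k(1, x²/(c_k² − x²)) − M_k(1, y²/c_k²) ], where the outer series converges. (Note that the hypotheses guarantee |x²/(c_k² − x²)| < 1 and |y²/c_k²| < 1 for all k ≥ 1, so each inner series converges.) -/
/-!
With `c_k = (k + 1/2)π`, both inner series are logarithms: the alternating one is
`log (1 + x²/(c_k² - x²)) = -log (1 - x²/c_k²)` and the other is `-log (1 - y²/c_k²)`.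
The hypotheses on `x` and `y` put `x²/(c_k² - x²)` and `y²/c_k²` inside the
disc of convergence. The outer sum is then the logarithm of the quotient of the Euler products
`cos t = ∏ₖ (1 - t²/c_k²)` at `t = y` and `t = x`; the cosine product follows from the sine
product through `cos t = sin (2t) / (2 sin t)`.
-/

open Real Filter Finset Topology

theorem Finset.prod_range_two_mul {M : Type*} [CommMonoid M] (f : ℕ → M) (n : ℕ) :
    ∏ j ∈ range (2 * n), f j = ∏ j ∈ range n, (f (2 * j) * f (2 * j + 1)) := by
  induction n with
  | zero => simp
  | succ n ih => rw [Nat.mul_succ, prod_range_succ, prod_range_succ, prod_range_succ, ih, mul_assoc]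

theorem Real.tendsto_euler_cos_prod {t : ℝ} (ht : sin t ≠ 0) :
    Tendsto (fun n : ℕ => ∏ j ∈ range n, (1 - t ^ 2 / (((j : ℝ) + 1 / 2) * π) ^ 2))
      atTop (𝓝 (cos t)) := by
  set u := t / π
  have hu : π * u = t := mul_div_cancel₀ t pi_ne_zero
  set S : ℕ → ℝ := fun n => π * u * ∏ j ∈ range n, (1 - u ^ 2 / ((j : ℝ) + 1) ^ 2)
  set C : ℕ → ℝ := fun n => ∏ j ∈ range n, (1 - t ^ 2 / (((j : ℝ) + 1 / 2) * π) ^ 2)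
  have hS : Tendsto S atTop (𝓝 (sin t)) := hu ▸ tendsto_euler_sin_prod u
  -- The even-indexed factors of the sine product for `2t` are those of `C`,
  -- the odd-indexed ones those of `S`.
  have hfactor : ∀ j : ℕ, (1 - (2 * u) ^ 2 / (((2 * j : ℕ) : ℝ) + 1) ^ 2) *
      (1 - (2 * u) ^ 2 / (((2 * j + 1 : ℕ) : ℝ) + 1) ^ 2) =
      (1 - u ^ 2 / ((j : ℝ) + 1) ^ 2) * (1 - t ^ 2 / (((j : ℝ) + 1 / 2) * π) ^ 2) := by
    intro j
    rw [← hu]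
    push_cast
    field_simp
    ring
  have hSC : Tendsto (fun n => 2 * S n * C n) atTop (𝓝 (sin (2 * t))) := by
    have := (tendsto_euler_sin_prod (2 * u)).comp (tendsto_id.const_mul_atTop' two_pos)
    rw [show sin (π * (2 * u)) = sin (2 * t) by rw [← hu]; ring_nf] at this
    refine this.congr fun n => ?_
    simp only [Function.comp_apply, id, prod_range_two_mul, hfactor, prod_mul_distrib, S, C]
    ring
  have hC := hSC.div (hS.const_mul 2) (mul_ne_zero two_ne_zero ht)
  rw [sin_two_mul, mul_div_cancel_left₀ _ (mul_ne_zero two_ne_zero ht)] at hC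
  refine hC.congr' ?_
  filter_upwards [hS.eventually_ne ht] with n hn
  exact mul_div_cancel_left₀ _ (mul_ne_zero two_ne_zero hn)

theorem Real.pi_sq_div_four_le_sq_half_add_mul_pi (k : ℕ) :
    π ^ 2 / 4 ≤ (((k : ℝ) + 1 / 2) * π) ^ 2 := by
  have : π / 2 ≤ ((k : ℝ) + 1 / 2) * π := by
    nlinarith [pi_pos, (Nat.cast_nonneg k : (0 : ℝ) ≤ k)]
  nlinarith [pi_pos]

theorem Real.hasSum_log_one_sub_sq_div_log_cos {t : ℝ} (ht : |t| < π / 2) :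
    HasSum (fun k : ℕ => log (1 - t ^ 2 / (((k : ℝ) + 1 / 2) * π) ^ 2)) (log (cos t)) := by
  rcases eq_or_ne t 0 with rfl | ht0
  · simp [hasSum_zero]
  have ht2 : t ^ 2 < π ^ 2 / 4 := by
    have := sq_lt_sq' (abs_lt.1 ht).1 (abs_lt.1 ht).2
    linarith
  have hpos : ∀ k : ℕ, 0 < 1 - t ^ 2 / (((k : ℝ) + 1 / 2) * π) ^ 2 := fun k => by
    have := pi_sq_div_four_le_sq_half_add_mul_pi k
    rw [sub_pos, div_lt_one (by positivity)]
    linarith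
  have hsum : Summable fun k : ℕ => log (1 - t ^ 2 / (((k : ℝ) + 1 / 2) * π) ^ 2) := by
    simp_rw [sub_eq_add_neg]
    refine summable_log_one_add_of_summable (Summable.neg ?_)
    have := ((summable_one_div_nat_add_rpow (1 / 2) 2).2 one_lt_two).mul_left (t ^ 2 / π ^ 2)
    refine this.congr fun k => ?_
    rw [rpow_two, sq_abs]
    field_simp
  have hprod := tendsto_euler_cos_prod ((sin_eq_zero_iff_of_lt_of_lt (by linarith [abs_lt.1 ht])
    (by linarith [abs_lt.1 ht])).not.2 ht0)
  have hcos : 0 < cos t := cos_pos_of_mem_Ioo (abs_lt.1 ht)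
  rw [hsum.hasSum_iff_tendsto_nat]
  exact ((continuousAt_log hcos.ne').tendsto.comp hprod).congr fun n =>
    log_prod fun k _ => (hpos k).ne'

theorem Real.hasSum_alternating_pow_div_log_one_add {a : ℝ} (ha : |a| < 1) :
    HasSum (fun n : ℕ => (-1) ^ n * a ^ (n + 1) / (n + 1)) (log (1 + a)) := by
  have := (hasSum_pow_div_log_of_abs_lt_one (x := -a) (by rwa [abs_neg])).neg
  rw [neg_neg, sub_neg_eq_add] at this
  refine this.congr_fun fun n => ?_
  rw [neg_pow, pow_succ]
  ring

theorem Real.tsum_alternating_pow_div_sub_eq_neg_log {a b : ℝ} (ha : 0 ≤ a) (hab : 2 * a < b) :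
    ∑' n : ℕ, (-1) ^ n * (a / (b - a)) ^ (n + 1) / (n + 1) = -log (1 - a / b) := by
  have hba : 0 < b - a := by linarith
  have hlt : |a / (b - a)| < 1 := by
    rw [abs_of_nonneg (div_nonneg ha hba.le), div_lt_one hba]
    linarith
  rw [(hasSum_alternating_pow_div_log_one_add hlt).tsum_eq, ← log_inv]
  congr 1
  field_simp [(show 0 < b by linarith).ne']
  ring

/-- Dirichlet series form of the Euler–Ramanujan identity:
for `|x| < π/(2√2)` and `|y| < √(π/2)`,
`log (cos y / cos x) = ∑_{k=1}^∞ [L_k(1, x²/(c_k² - x²)) - M_k(1, y²/c_k²)]`,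
where `c_k = (k - 1/2)π`, `L_k(1,a) = ∑_{n=1}^∞ (-1)^{n+1} aⁿ/n` and
`M_k(1,b) = ∑_{n=1}^∞ bⁿ/n`.  The outer index `k : ℕ` corresponds to the
original index `k + 1` (so `c_k = ((k:ℝ) + 1/2) * π`), and the inner index
`n : ℕ` to the original `n + 1`. -/
theorem log_euler_ramanujan_dirichlet (x y : ℝ)
    (hx : |x| < Real.pi / (2 * Real.sqrt 2)) (hy : |y| < Real.sqrt (Real.pi / 2)) :
    HasSum
      (fun k : ℕ =>
        (∑' n : ℕ, (-1 : ℝ) ^ n *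
            (x ^ 2 / ((((k : ℝ) + 1 / 2) * Real.pi) ^ 2 - x ^ 2)) ^ (n + 1) / ((n : ℝ) + 1)) -
        (∑' n : ℕ,
            (y ^ 2 / (((k : ℝ) + 1 / 2) * Real.pi) ^ 2) ^ (n + 1) / ((n : ℝ) + 1)))
      (Real.log (Real.cos y / Real.cos x)) := by
  have hx2 : x ^ 2 < π ^ 2 / 8 := by
    have := pow_lt_pow_left₀ hx (abs_nonneg x) two_ne_zero
    rwa [sq_abs, div_pow, mul_pow, sq_sqrt zero_le_two,
      show (2 : ℝ) ^ 2 * 2 = 8 by norm_num] at this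
  have hy2 : y ^ 2 < π ^ 2 / 4 := by
    have := (lt_sqrt (abs_nonneg y)).1 hy
    rw [sq_abs] at this
    nlinarith [pi_gt_three]
  have hx' : |x| < π / 2 := abs_lt_of_sq_lt_sq (by linarith [sq_nonneg π]) (by positivity)
  have hy' : |y| < π / 2 := abs_lt_of_sq_lt_sq (by linarith) (by positivity)
  rw [log_div (cos_pos_of_mem_Ioo (abs_lt.1 hy')).ne' (cos_pos_of_mem_Ioo (abs_lt.1 hx')).ne']
  refine ((hasSum_log_one_sub_sq_div_log_cos hy').sub
    (hasSum_log_one_sub_sq_div_log_cos hx')).congr_fun fun k => ?_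
  have hc := pi_sq_div_four_le_sq_half_add_mul_pi k
  have hyc : |y ^ 2 / (((k : ℝ) + 1 / 2) * π) ^ 2| < 1 := by
    rw [abs_of_nonneg (by positivity), div_lt_one (by positivity)]
    linarith
  rw [tsum_alternating_pow_div_sub_eq_neg_log (sq_nonneg x) (by linarith),
    (hasSum_pow_div_log_of_abs_lt_one hyc).tsum_eq]
  ring
end

section
/- Let ζ be a complex number with |ζ| < 1/2, and set x = 2·Re(arctan ζ) and y = −Im(log((1 + ζ)/(1 − ζ))), where arctan ζ = (i/2)(log(1 − iζ) − log(1 + iζ)) and log is the principal branch of the complex logarithm. Then Re(log((1 + ζ²)/(1 − ζ²))) = ∑_{k=1}^∞ [ L_k(1, x²/(c_k² − x²)) − M_k(1, y²/c_k²) ], where the outer series converges. -/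
/-!
Both `x` and `-y` are arguments of numbers `(1 + z) * conj (1 - z)` (with `z = iζ`, resp. `z = ζ`),
which have real part `1 - ‖ζ‖²` and modulus `‖1 - z²‖`. Hence `cos x = (1 - ‖ζ‖²) / ‖1 + ζ²‖` and
`cos y = (1 - ‖ζ‖²) / ‖1 - ζ²‖`, so `Re log ((1 + ζ²) / (1 - ζ²)) = log cos y - log cos x`; for
`‖ζ‖ < 1/2` these values also force `|x| < π/3` and `|y| < π/2`. Euler's sine product at `2t` splits
into the sine product at `t` times the cosine product `∏ (1 - t² / c_k²)`, which gives
`log cos t = ∑ log (1 - t² / c_k²)` for `|t| < π/2`. The inner series are Mercator series: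
`L_k(1, x² / (c_k² - x²)) = -log (1 - x² / c_k²)` and `M_k(1, y² / c_k²) = -log (1 - y² / c_k²)`.
-/

open Filter Finset Topology ComplexConjugate

namespace Real

lemma prod_range_two_mul_sine_factors (x : ℝ) (n : ℕ) :
    ∏ j ∈ range (2 * n), (1 - (2 * x) ^ 2 / ((j : ℝ) + 1) ^ 2) =
      (∏ j ∈ range n, (1 - x ^ 2 / ((j : ℝ) + 1) ^ 2)) *
        ∏ k ∈ range n, (1 - x ^ 2 / ((k : ℝ) + 1 / 2) ^ 2) := by
  induction n with
  | zero => simp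
  | succ n ih =>
    rw [Nat.mul_succ, prod_range_succ, prod_range_succ, ih, prod_range_succ, prod_range_succ]
    have heven : 1 - (2 * x) ^ 2 / (((2 * n : ℕ) : ℝ) + 1) ^ 2 =
        1 - x ^ 2 / ((n : ℝ) + 1 / 2) ^ 2 := by
      push_cast
      field_simp
    have hodd : 1 - (2 * x) ^ 2 / (((2 * n + 1 : ℕ) : ℝ) + 1) ^ 2 =
        1 - x ^ 2 / ((n : ℝ) + 1) ^ 2 := by
      push_cast
      field_simp
      ring
    rw [heven, hodd]
    ring

theorem tendsto_euler_cos_prod_s5 {x : ℝ} (hx : sin (π * x) ≠ 0) :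
    Tendsto (fun n : ℕ => ∏ k ∈ range n, (1 - x ^ 2 / ((k : ℝ) + 1 / 2) ^ 2))
      atTop (𝓝 (cos (π * x))) := by
  have hsin := tendsto_euler_sin_prod x
  have hsin₂ := (tendsto_euler_sin_prod (2 * x)).comp (tendsto_id.const_mul_atTop' two_pos)
  have hquot := hsin₂.div (hsin.const_mul 2) (mul_ne_zero two_ne_zero hx)
  rw [show π * (2 * x) = 2 * (π * x) by ring, sin_two_mul,
    mul_assoc, mul_div_mul_left _ _ (two_ne_zero' ℝ), mul_div_cancel_left₀ _ hx] at hquot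
  refine hquot.congr' ?_
  filter_upwards [hsin.eventually_ne hx] with n hn
  simp only [Pi.div_apply, Function.comp_apply, id, prod_range_two_mul_sine_factors]
  rw [← mul_assoc, mul_assoc 2, mul_div_cancel_left₀ _ (mul_ne_zero two_ne_zero hn)]

lemma pi_div_two_le_add_one_half_mul_pi (k : ℕ) : π / 2 ≤ ((k : ℝ) + 1 / 2) * π := by
  nlinarith [pi_pos, k.cast_nonneg (α := ℝ)]

lemma summable_sq_div_add_one_half_mul_pi_sq (t : ℝ) :
    Summable fun k : ℕ => t ^ 2 / (((k : ℝ) + 1 / 2) * π) ^ 2 := by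
  have h := (summable_one_div_nat_add_rpow (1 / 2) 2).mpr one_lt_two
  refine (h.mul_left (t ^ 2 / π ^ 2)).congr fun k => ?_
  rw [abs_of_pos (by positivity), rpow_two]
  field_simp

theorem hasSum_log_euler_cos_factors {t : ℝ} (ht : |t| < π / 2) :
    HasSum (fun k : ℕ => log (1 - t ^ 2 / (((k : ℝ) + 1 / 2) * π) ^ 2)) (log (cos t)) := by
  rcases eq_or_ne t 0 with rfl | ht₀
  · simp
  have hfactor_pos (k : ℕ) : 0 < 1 - t ^ 2 / (((k : ℝ) + 1 / 2) * π) ^ 2 := by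
    rw [sub_pos, div_lt_one (by positivity), ← sq_abs]
    exact pow_lt_pow_left₀ (ht.trans_le (pi_div_two_le_add_one_half_mul_pi k)) (abs_nonneg t)
      two_ne_zero
  have hsummable : Summable fun k : ℕ => log (1 - t ^ 2 / (((k : ℝ) + 1 / 2) * π) ^ 2) := by
    simpa [sub_eq_add_neg] using
      summable_log_one_add_of_summable (summable_sq_div_add_one_half_mul_pi_sq t).neg
  have hprod := (hasProd_of_hasSum_log hfactor_pos hsummable.hasSum).tendsto_prod_nat
  have hsin : sin (π * (t / π)) ≠ 0 := by
    rw [mul_div_cancel₀ _ pi_ne_zero, Ne,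
      sin_eq_zero_iff_of_lt_of_lt (by linarith [neg_abs_le t, pi_pos])
        (by linarith [le_abs_self t, pi_pos])]
    exact ht₀
  have hcos := tendsto_euler_cos_prod_s5 hsin
  rw [mul_div_cancel₀ _ pi_ne_zero] at hcos
  have hexp : rexp (∑' k : ℕ, log (1 - t ^ 2 / (((k : ℝ) + 1 / 2) * π) ^ 2)) = cos t := by
    refine tendsto_nhds_unique hprod (hcos.congr fun n => prod_congr rfl fun k _ => ?_)
    rw [div_pow, div_div, mul_pow, mul_comm (π ^ 2)]
  rw [← hexp, log_exp]
  exact hsummable.hasSum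

lemma hasSum_alternating_pow_div_log_of_abs_lt_one {r : ℝ} (hr : |r| < 1) :
    HasSum (fun n : ℕ => (-1) ^ n * r ^ (n + 1) / ((n : ℝ) + 1)) (log (1 + r)) := by
  have h := (hasSum_pow_div_log_of_abs_lt_one (x := -r) (by rwa [abs_neg])).neg
  rw [neg_neg, sub_neg_eq_add] at h
  refine h.congr_fun fun n => ?_
  rw [neg_pow, pow_succ]
  ring

lemma tsum_alternating_sub_tsum_eq_log_sub_log {c x y : ℝ} (hx : 2 * x ^ 2 < c ^ 2)
    (hy : y ^ 2 < c ^ 2) :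
    (∑' n : ℕ, (-1) ^ n * (x ^ 2 / (c ^ 2 - x ^ 2)) ^ (n + 1) / ((n : ℝ) + 1)) -
        ∑' n : ℕ, (y ^ 2 / c ^ 2) ^ (n + 1) / ((n : ℝ) + 1) =
      log (1 - y ^ 2 / c ^ 2) - log (1 - x ^ 2 / c ^ 2) := by
  have hcx : 0 < c ^ 2 - x ^ 2 := by nlinarith [sq_nonneg x]
  have hc : 0 < c ^ 2 := by nlinarith [sq_nonneg x]
  have hxr : |x ^ 2 / (c ^ 2 - x ^ 2)| < 1 := by
    rw [abs_of_nonneg (by positivity), div_lt_one hcx]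
    linarith
  have hyr : |y ^ 2 / c ^ 2| < 1 := by
    rw [abs_of_nonneg (by positivity), div_lt_one hc]
    exact hy
  have hinv : 1 + x ^ 2 / (c ^ 2 - x ^ 2) = (1 - x ^ 2 / c ^ 2)⁻¹ := by
    rw [one_sub_div hc.ne', inv_div, one_add_div hcx.ne', sub_add_cancel]
  rw [(hasSum_alternating_pow_div_log_of_abs_lt_one hxr).tsum_eq,
    (hasSum_pow_div_log_of_abs_lt_one hyr).tsum_eq, hinv, log_inv]
  ring

lemma abs_lt_of_cos_lt_cos {a t : ℝ} (ha : 0 ≤ a) (ht : |t| ≤ π) (h : cos a < cos t) : |t| < a := by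
  by_contra! hle
  have := cos_le_cos_of_nonneg_of_le_pi ha ht hle
  rw [cos_abs] at this
  linarith

theorem hasSum_log_cos_sub_log_cos {x y : ℝ} (hx : |x| < π / 3) (hy : |y| < π / 2) :
    HasSum (fun k : ℕ =>
        (∑' n : ℕ, (-1 : ℝ) ^ n *
            (x ^ 2 / ((((k : ℝ) + 1 / 2) * π) ^ 2 - x ^ 2)) ^ (n + 1) / ((n : ℝ) + 1)) -
          ∑' n : ℕ, (y ^ 2 / (((k : ℝ) + 1 / 2) * π) ^ 2) ^ (n + 1) / ((n : ℝ) + 1))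
      (log (cos y) - log (cos x)) := by
  refine ((hasSum_log_euler_cos_factors hy).sub
    (hasSum_log_euler_cos_factors (hx.trans (by linarith [pi_pos])))).congr_fun fun k => ?_
  have hc := pi_div_two_le_add_one_half_mul_pi k
  rw [← sq_abs x, ← sq_abs y]
  apply tsum_alternating_sub_tsum_eq_log_sub_log <;> nlinarith [abs_nonneg x, abs_nonneg y, pi_pos]

end Real

namespace Complex

lemma arg_div_eq_arg_mul_conj (a b : ℂ) : arg (a / b) = arg (a * conj b) := by
  rcases eq_or_ne b 0 with rfl | hb
  · simp
  rw [div_eq_mul_inv, inv_def, ← mul_assoc, arg_mul_real (inv_pos.mpr (normSq_pos.mpr hb))]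

lemma one_add_ne_zero_of_norm_lt_one {z : ℂ} (hz : ‖z‖ < 1) : 1 + z ≠ 0 :=
  slitPlane_ne_zero (mem_slitPlane_of_norm_lt_one hz)

lemma one_sub_ne_zero_of_norm_lt_one {z : ℂ} (hz : ‖z‖ < 1) : 1 - z ≠ 0 := by
  simpa [sub_eq_add_neg] using one_add_ne_zero_of_norm_lt_one (z := -z) (by simpa using hz)

lemma arg_one_add_sub_arg_one_sub {z : ℂ} (hz : ‖z‖ < 1) :
    arg (1 + z) - arg (1 - z) = arg ((1 + z) * conj (1 - z)) := by
  have h₁ := arg_one_add_mem_Ioo hz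
  have h₂ := arg_one_add_mem_Ioo (z := -z) (by simpa using hz)
  rw [← sub_eq_add_neg] at h₂
  have harg_conj : arg (conj (1 - z)) = -arg (1 - z) := by
    rw [arg_conj, if_neg (by linarith [h₂.2, Real.pi_pos])]
  have hmem : arg (1 + z) + arg (conj (1 - z)) ∈ Set.Ioc (-Real.pi) Real.pi := by
    rw [harg_conj]
    constructor <;> linarith [h₁.1, h₁.2, h₂.1, h₂.2]
  rw [arg_mul (one_add_ne_zero_of_norm_lt_one hz)
    ((map_ne_zero conj).mpr (one_sub_ne_zero_of_norm_lt_one hz)) hmem, harg_conj, sub_eq_add_neg]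

lemma re_one_add_mul_conj_one_sub (z : ℂ) : ((1 + z) * conj (1 - z)).re = 1 - ‖z‖ ^ 2 := by
  rw [← normSq_eq_norm_sq]
  simp only [map_sub, map_one, mul_re, add_re, sub_re, one_re, one_im, conj_re, conj_im, add_im,
    sub_im, normSq_apply]
  ring

lemma cos_arg_one_add_mul_conj_one_sub {z : ℂ} (hz : ‖z‖ < 1) :
    Real.cos (arg ((1 + z) * conj (1 - z))) = (1 - ‖z‖ ^ 2) / ‖1 - z ^ 2‖ := by
  rw [cos_arg (mul_ne_zero (one_add_ne_zero_of_norm_lt_one hz)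
    ((map_ne_zero conj).mpr (one_sub_ne_zero_of_norm_lt_one hz))), re_one_add_mul_conj_one_sub,
    norm_mul, norm_conj, ← norm_mul, show (1 + z) * (1 - z) = 1 - z ^ 2 by ring]

lemma cos_arg_one_add_I_mul_mul_conj_one_sub_I_mul {ζ : ℂ} (hζ : ‖ζ‖ < 1) :
    Real.cos (arg ((1 + I * ζ) * conj (1 - I * ζ))) = (1 - ‖ζ‖ ^ 2) / ‖1 + ζ ^ 2‖ := by
  rw [cos_arg_one_add_mul_conj_one_sub (by rwa [norm_mul, norm_I, one_mul]), norm_mul, norm_I,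
    one_mul, mul_pow, I_sq, neg_one_mul, sub_neg_eq_add]

lemma abs_arg_one_add_mul_conj_one_sub_lt {z : ℂ} (hz : ‖z‖ < 1) :
    |arg ((1 + z) * conj (1 - z))| < Real.pi / 2 := by
  refine abs_arg_lt_pi_div_two_iff.mpr (Or.inl ?_)
  rw [re_one_add_mul_conj_one_sub]
  nlinarith [norm_nonneg z]

lemma re_log_one_add_sq_div_one_sub_sq {ζ : ℂ} (hζ : ‖ζ‖ < 1) :
    (log ((1 + ζ ^ 2) / (1 - ζ ^ 2))).re =
      Real.log (Real.cos (arg ((1 + ζ) * conj (1 - ζ)))) -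
        Real.log (Real.cos (arg ((1 + I * ζ) * conj (1 - I * ζ)))) := by
  have hζsq : ‖ζ ^ 2‖ < 1 := by rw [norm_pow]; nlinarith [norm_nonneg ζ]
  have hs : 1 - ‖ζ‖ ^ 2 ≠ 0 := by nlinarith [norm_nonneg ζ]
  have hplus : ‖1 + ζ ^ 2‖ ≠ 0 := norm_ne_zero_iff.mpr (one_add_ne_zero_of_norm_lt_one hζsq)
  have hminus : ‖1 - ζ ^ 2‖ ≠ 0 := norm_ne_zero_iff.mpr (one_sub_ne_zero_of_norm_lt_one hζsq)
  rw [cos_arg_one_add_mul_conj_one_sub hζ, cos_arg_one_add_I_mul_mul_conj_one_sub_I_mul hζ,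
    log_re, norm_div, Real.log_div hplus hminus, Real.log_div hs hplus, Real.log_div hs hminus]
  ring

lemma abs_arg_one_add_I_mul_mul_conj_one_sub_I_mul_lt {ζ : ℂ} (hζ : ‖ζ‖ < 1 / 2) :
    |arg ((1 + I * ζ) * conj (1 - I * ζ))| < Real.pi / 3 := by
  refine Real.abs_lt_of_cos_lt_cos (by positivity) (abs_arg_le_pi _) ?_
  have hζsq : ‖ζ ^ 2‖ < 1 := by rw [norm_pow]; nlinarith [norm_nonneg ζ]
  have hnorm : ‖1 + ζ ^ 2‖ ≤ 1 + ‖ζ‖ ^ 2 :=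
    (norm_add_le _ _).trans_eq (by rw [norm_one, norm_pow])
  rw [Real.cos_pi_div_three, cos_arg_one_add_I_mul_mul_conj_one_sub_I_mul (by linarith),
    lt_div_iff₀ (norm_pos_iff.mpr (one_add_ne_zero_of_norm_lt_one hζsq))]
  nlinarith [norm_nonneg ζ]

end Complex

open Complex Real

/-- Dirichlet series decomposition of Scherk's surface in the
Weierstrass–Enneper parametrization: for `|ζ| < 1/2`, with
`x = 2 Re (arctan ζ)` and `y = -Im (log ((1+ζ)/(1-ζ)))`
(`arctan ζ = (i/2)(log(1 - iζ) - log(1 + iζ))`, `log` principal),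
`Re (log ((1+ζ²)/(1-ζ²))) = ∑_{k=1}^∞ [L_k(1, x²/(c_k² - x²)) - M_k(1, y²/c_k²)]`
where `c_k = (k - 1/2)π`, `L_k(1,a) = ∑_{n=1}^∞ (-1)^{n+1} aⁿ/n`,
`M_k(1,b) = ∑_{n=1}^∞ bⁿ/n`.  The outer index `k : ℕ` corresponds to the
original index `k + 1` and the inner index `n : ℕ` to the original `n + 1`. -/
theorem scherk_weierstrass_enneper_dirichlet (ζ : ℂ) (hζ : ‖ζ‖ < 1 / 2)
    (x y : ℝ)
    (hx : x = 2 * ((Complex.I / 2) *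
      (Complex.log (1 - Complex.I * ζ) - Complex.log (1 + Complex.I * ζ))).re)
    (hy : y = -(Complex.log ((1 + ζ) / (1 - ζ))).im) :
    HasSum
      (fun k : ℕ =>
        (∑' n : ℕ, (-1 : ℝ) ^ n *
            (x ^ 2 / ((((k : ℝ) + 1 / 2) * Real.pi) ^ 2 - x ^ 2)) ^ (n + 1) / ((n : ℝ) + 1)) -
        (∑' n : ℕ,
            (y ^ 2 / (((k : ℝ) + 1 / 2) * Real.pi) ^ 2) ^ (n + 1) / ((n : ℝ) + 1)))
      ((Complex.log ((1 + ζ ^ 2) / (1 - ζ ^ 2))).re) := by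
  have hζ₁ : ‖ζ‖ < 1 := by linarith
  have hx' : x = arg ((1 + I * ζ) * conj (1 - I * ζ)) := by
    rw [hx, ← arg_one_add_sub_arg_one_sub (by rwa [norm_mul, norm_I, one_mul])]
    simp [log_im]
  have hy' : y = -arg ((1 + ζ) * conj (1 - ζ)) := by
    rw [hy, log_im, arg_div_eq_arg_mul_conj]
  rw [re_log_one_add_sq_div_one_sub_sq hζ₁, ← Real.cos_neg (arg ((1 + ζ) * conj (1 - ζ))),
    ← hx', ← hy']
  exact hasSum_log_cos_sub_log_cos (hx' ▸ abs_arg_one_add_I_mul_mul_conj_one_sub_I_mul_lt hζ)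
    (by rw [hy', abs_neg]; exact abs_arg_one_add_mul_conj_one_sub_lt hζ₁)
end
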